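/- For all integers m ≥ 0 and n ≥ 0, a̅_{2m+2}(4n+1) ≡ 2·h(n) (mod 8), where h(n) denotes the coefficient of q^n in the formal power series f_2 f_4 = (q^2;q^2)_∞ (q^4;q^4)_∞. -/

import Mathlib

/-- The infinite product `(q^h; q^h)_∞ = ∏_{k ≥ 0} (1 - q^{h(k+1)})` as a formal power
series over `R`.  Since the factor `1 - q^{h(k+1)}` only affects coefficients of
degree `≥ k + 1`, the coefficient of `qⁿ` is that of the finite truncated product
over `k < n + 1`. -/
noncomputable def qPochInf (R : Type*) [CommRing R] (h : ℕ) : PowerSeries R :=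
  PowerSeries.mk fun n =>
    PowerSeries.coeff (R := R) n
      (∏ k ∈ Finset.range (n + 1), (1 - PowerSeries.X ^ (h * (k + 1))))

/-- `abar` is the generalized overcubic partition family: for every `c ≥ 1`,
`∑_{n≥0} a̅_c(n) qⁿ = f₄^(c-1) / (f₁² f₂^(2c-3))`, stated multiplied out (both sides
multiplied by `f₁² f₂^(2c-3) · f₂³ = f₁² f₂^(2c) / f₂³`, i.e. as
`(∑ a̅_c(n) qⁿ) · f₁² · f₂^(2c) = f₄^(c-1) · f₂³`) so as to avoid the negative
exponent `2c - 3 = -1` occurring when `c = 1`; this is equivalent since the `fₕ`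
are units in the ring of formal power series. -/
def IsGenOvercubic (abar : ℕ → ℕ → ℕ) : Prop :=
  ∀ c : ℕ, 1 ≤ c →
    (PowerSeries.mk fun n => (abar c n : ℤ)) * qPochInf ℤ 1 ^ 2 * qPochInf ℤ 2 ^ (2 * c) =
      qPochInf ℤ 4 ^ (c - 1) * qPochInf ℤ 2 ^ 3


/-!
Gauss's identities `f₁² = f₂ φ(-q)` and `f₁ ψ(q) = f₂²` come from Cauchy's finite q-binomial
theorem: with `q = X` resp. `q = X²` and a suitable homogenising variable, its Gaussian binomials
tend `X`-adically to `1 / f₁` resp. `1 / f₂`, while the sums become theta series. They turn the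
generating function of `a̅_c` into `1 / (φ(-q) φ(-q²)^(c-1))`.

Modulo 8, `(1 + 2x)⁻¹ = 1 - 2x + 4x²` and `2 (1 - 2x + 4x²)² = 2`. Write `φ(-q) = 1 + 2S` and split
`S = T(q⁴) - q ψ(q⁸)` into even and odd squares, where `T = ∑_{k ≥ 1} q^{k²} ≡ S (mod 2)`. Then,
modulo 8, `1 / (φ(-q) φ(-q²)^(2m+1))` is an even series plus `2 q ψ(q⁸) φ(-q⁸)` plus four times a
series supported on exponents `≡ 3 (mod 4)`, so
`a̅_{2m+2}(4n+1) ≡ 2 [q^{4n}] ψ(q⁸) φ(-q⁸) = 2 [q^{4n}] f₈ f₁₆ = 2 h(n)`.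
-/

open PowerSeries Finset

noncomputable section

namespace Overcubic

section Approximation

variable {R : Type*} [CommRing R]

theorem smodEq_X_pow_iff {f g : R⟦X⟧} {N : ℕ} :
    f ≡ g [SMOD Ideal.span {X ^ N}] ↔ ∀ m < N, coeff m f = coeff m g := by
  simp only [SModEq.sub_mem, Ideal.mem_span_singleton, X_pow_dvd_iff, map_sub, sub_eq_zero]

theorem smodEq_X_pow_mono {f g : R⟦X⟧} {M N : ℕ} (hMN : M ≤ N)
    (h : f ≡ g [SMOD Ideal.span {X ^ N}]) : f ≡ g [SMOD Ideal.span {X ^ M}] :=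
  h.mono (Ideal.span_singleton_le_span_singleton.mpr (pow_dvd_pow X hMN))

theorem eq_of_forall_smodEq_X_pow {f g : R⟦X⟧}
    (h : ∀ N, f ≡ g [SMOD Ideal.span {X ^ N}]) : f = g := by
  ext m
  exact smodEq_X_pow_iff.mp (h (m + 1)) m m.lt_succ_self

theorem X_pow_smodEq_zero {e N : ℕ} (h : N ≤ e) :
    (X ^ e : R⟦X⟧) ≡ 0 [SMOD Ideal.span {X ^ N}] := by
  rw [SModEq.zero, Ideal.mem_span_singleton]
  exact pow_dvd_pow X h

theorem one_sub_X_pow_smodEq_one {N e : ℕ} (h : N ≤ e) :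
    (1 - X ^ e : R⟦X⟧) ≡ 1 [SMOD Ideal.span {X ^ N}] := by
  simpa using (SModEq.refl (1 : R⟦X⟧)).sub (X_pow_smodEq_zero h)

theorem X_pow_mul_smodEq {a b : R⟦X⟧} {M : ℕ} (h : a ≡ b [SMOD Ideal.span {X ^ M}]) (e : ℕ) :
    X ^ e * a ≡ X ^ e * b [SMOD Ideal.span {X ^ (e + M)}] := by
  rw [SModEq.sub_mem, Ideal.mem_span_singleton] at h ⊢
  rw [← mul_sub, pow_add]
  exact mul_dvd_mul_left _ h

theorem smodEq_expand {f g : R⟦X⟧} {N p : ℕ} (hp : p ≠ 0)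
    (h : f ≡ g [SMOD Ideal.span {X ^ N}]) :
    expand p hp f ≡ expand p hp g [SMOD Ideal.span {X ^ N}] := by
  rw [SModEq.sub_mem, Ideal.mem_span_singleton] at h ⊢
  have := map_dvd (expand p hp) h
  rw [map_pow, expand_X, ← pow_mul, map_sub] at this
  exact (pow_dvd_pow X (Nat.le_mul_of_pos_left N (Nat.pos_of_ne_zero hp))).trans this

end Approximation

section QPochhammer

variable {R : Type*} [CommRing R]

def qPoch (q : R) (n : ℕ) : R := ∏ k ∈ range n, (1 - q ^ (k + 1))

theorem qPoch_succ (q : R) (n : ℕ) : qPoch q (n + 1) = qPoch q n * (1 - q ^ (n + 1)) :=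
  prod_range_succ _ n

theorem qPoch_X_pow_smodEq {h : ℕ} (hh : 1 ≤ h) {M N : ℕ} (hNM : N ≤ M) :
    qPoch (X ^ h : R⟦X⟧) M ≡ qPoch (X ^ h) N [SMOD Ideal.span {X ^ (N + 1)}] := by
  have htail : ∏ k ∈ Ico N M, (1 - (X ^ h : R⟦X⟧) ^ (k + 1)) ≡ ∏ k ∈ Ico N M, 1
      [SMOD Ideal.span {X ^ (N + 1)}] := SModEq.prod fun k hk => by
    rw [← pow_mul]
    exact one_sub_X_pow_smodEq_one (by have := (mem_Ico.mp hk).1; nlinarith)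
  simpa only [qPoch, ← prod_range_mul_prod_Ico _ hNM, prod_const_one, mul_one] using
    (SModEq.refl (qPoch (X ^ h : R⟦X⟧) N)).mul htail

theorem qPochInf_smodEq {h : ℕ} (hh : 1 ≤ h) (N : ℕ) :
    qPochInf R h ≡ qPoch (X ^ h) N [SMOD Ideal.span {X ^ (N + 1)}] := by
  refine smodEq_X_pow_iff.mpr fun m hm => ?_
  have hm' : coeff m (qPochInf R h) = coeff m (qPoch (X ^ h : R⟦X⟧) (m + 1)) := by
    simp only [qPochInf, coeff_mk, qPoch, ← pow_mul]
  rw [hm']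
  rcases le_total N (m + 1) with hle | hle
  · exact smodEq_X_pow_iff.mp (qPoch_X_pow_smodEq hh hle) m hm
  · exact (smodEq_X_pow_iff.mp (qPoch_X_pow_smodEq hh hle) m (by omega)).symm

theorem isUnit_qPochInf {h : ℕ} (hh : 1 ≤ h) : IsUnit (qPochInf R h) := by
  have := smodEq_X_pow_iff.mp (qPochInf_smodEq (R := R) hh 0) 0 zero_lt_one
  simp_all [isUnit_iff_constantCoeff, qPoch]

theorem expand_qPochInf {p : ℕ} (hp : p ≠ 0) {h : ℕ} (hh : 1 ≤ h) :
    expand p hp (qPochInf R h) = qPochInf R (p * h) := by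
  refine eq_of_forall_smodEq_X_pow fun N => smodEq_X_pow_mono (Nat.le_succ N) ?_
  have hexp : expand p hp (qPoch (X ^ h : R⟦X⟧) N) = qPoch (X ^ (p * h)) N := by
    simp only [qPoch, map_prod, map_sub, map_one, map_pow, expand_X, ← pow_mul, mul_assoc]
  have := smodEq_expand hp (qPochInf_smodEq (R := R) hh N)
  rw [hexp] at this
  exact this.trans (qPochInf_smodEq (by nlinarith [Nat.pos_of_ne_zero hp]) N).symm

theorem prod_one_add_X_pow_mul_qPochInf_smodEq (m : ℕ) :
    (∏ i ∈ range m, (1 + X ^ (i + 1))) * qPochInf R 1 ≡ qPochInf R 2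
      [SMOD Ideal.span {X ^ (m + 1)}] := by
  have h : (∏ i ∈ range m, (1 + X ^ (i + 1))) * qPoch (X ^ 1 : R⟦X⟧) m = qPoch (X ^ 2) m := by
    rw [qPoch, qPoch, ← prod_mul_distrib]
    refine prod_congr rfl fun i _ => ?_
    rw [pow_one, ← pow_mul, mul_comm 2, pow_mul]
    ring
  have h₁ : qPochInf R 1 ≡ qPoch (X ^ 1) m [SMOD Ideal.span {X ^ (m + 1)}] :=
    qPochInf_smodEq le_rfl m
  have h₂ : qPochInf R 2 ≡ qPoch (X ^ 2) m [SMOD Ideal.span {X ^ (m + 1)}] :=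
    qPochInf_smodEq one_le_two m
  rw [← h] at h₂
  exact (SModEq.rfl.mul h₁).trans h₂.symm

theorem prod_one_sub_X_pow_odd_mul_qPochInf_smodEq (m : ℕ) :
    (∏ i ∈ range m, (1 - X ^ (2 * i + 1))) * qPochInf R 2 ≡ qPochInf R 1
      [SMOD Ideal.span {X ^ (m + 1)}] := by
  have h : ∀ m, (∏ i ∈ range m, (1 - X ^ (2 * i + 1))) * qPoch (X ^ 2 : R⟦X⟧) m =
      qPoch (X ^ 1) (2 * m) := by
    intro m
    induction m with
    | zero => simp [qPoch]
    | succ m ih =>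
      rw [prod_range_succ, qPoch_succ, show 2 * (m + 1) = 2 * m + 1 + 1 by ring, qPoch_succ,
        qPoch_succ, ← ih, pow_one, ← pow_mul, show 2 * m + 1 + 1 = 2 * (m + 1) by ring]
      ring
  have h₁ : qPochInf R 1 ≡ qPoch (X ^ 1) (2 * m) [SMOD Ideal.span {X ^ (m + 1)}] :=
    smodEq_X_pow_mono (by omega) (qPochInf_smodEq le_rfl (2 * m))
  have h₂ : qPochInf R 2 ≡ qPoch (X ^ 2) m [SMOD Ideal.span {X ^ (m + 1)}] :=
    qPochInf_smodEq one_le_two m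
  rw [← h m] at h₁
  exact (SModEq.rfl.mul h₂).trans h₁.symm

end QPochhammer

section GaussianBinomial

variable {R : Type*} [CommRing R]

def qBinom (q : R) : ℕ → ℕ → R
  | _, 0 => 1
  | 0, _ + 1 => 0
  | N + 1, j + 1 => qBinom q N j + q ^ (j + 1) * qBinom q N (j + 1)

@[simp] theorem qBinom_zero_right (q : R) (N : ℕ) : qBinom q N 0 = 1 := by
  cases N <;> rfl

theorem qBinom_succ_succ (q : R) (N j : ℕ) :
    qBinom q (N + 1) (j + 1) = qBinom q N j + q ^ (j + 1) * qBinom q N (j + 1) := rfl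

theorem qBinom_eq_zero_of_lt (q : R) : ∀ {N j : ℕ}, N < j → qBinom q N j = 0
  | 0, _ + 1, _ => rfl
  | N + 1, j + 1, h => by
    rw [qBinom_succ_succ, qBinom_eq_zero_of_lt q (by omega : N < j),
      qBinom_eq_zero_of_lt q (by omega : N < j + 1), mul_zero, add_zero]

@[simp] theorem qBinom_self (q : R) : ∀ N : ℕ, qBinom q N N = 1
  | 0 => rfl
  | N + 1 => by rw [qBinom_succ_succ, qBinom_self q N, qBinom_eq_zero_of_lt q N.lt_succ_self]; ring

theorem choose_two_succ (j : ℕ) : (j + 1).choose 2 = j.choose 2 + j := by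
  rw [Nat.choose_succ_succ', Nat.choose_one_right, add_comm]

/-- Cauchy's q-binomial theorem, in homogeneous form. -/
theorem prod_add_mul_pow_eq_sum (q : R) (N : ℕ) : ∀ w z : R,
    ∏ k ∈ range N, (w + z * q ^ k) =
      ∑ j ∈ range (N + 1), q ^ j.choose 2 * qBinom q N j * z ^ j * w ^ (N - j) := by
  induction N with
  | zero => intro w z; simp
  | succ N ih =>
    intro w z
    set U : ℕ → R := fun j => q ^ j.choose 2 * qBinom q N j * (z * q) ^ j * w ^ (N - j)
    set A : ℕ → R := fun j => q ^ (j + 1).choose 2 * qBinom q N j * z ^ (j + 1) * w ^ (N - j)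
    set B : ℕ → R := fun j =>
      q ^ (j + 1).choose 2 * (q ^ (j + 1) * qBinom q N (j + 1)) * z ^ (j + 1) * w ^ (N - j)
    have hA : ∀ j, z * U j = A j := fun j => by
      simp only [U, A, choose_two_succ, pow_add, mul_pow]; ring
    have hB : ∀ j < N, w * U (j + 1) = B j := fun j hj => by
      simp only [U, B, mul_pow]
      rw [show N - j = N - (j + 1) + 1 by omega, pow_succ w]; ring
    have hBN : B N = 0 := by simp [B, qBinom_eq_zero_of_lt q N.lt_succ_self]
    calc ∏ k ∈ range (N + 1), (w + z * q ^ k)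
        = (w + z) * ∏ k ∈ range N, (w + z * q * q ^ k) := by
          rw [prod_range_succ', mul_comm]; simp only [pow_succ', pow_zero, mul_one, mul_assoc]
      _ = w * U 0 + ∑ j ∈ range N, w * U (j + 1) + ∑ j ∈ range (N + 1), z * U j := by
          rw [ih, add_mul, mul_sum, mul_sum, sum_range_succ' (fun j => w * U j),
            add_comm (∑ j ∈ _, _)]
      _ = w ^ (N + 1) + ∑ j ∈ range (N + 1), B j + ∑ j ∈ range (N + 1), A j := by
          rw [sum_range_succ B, hBN, add_zero, sum_congr rfl fun j hj => hB j (mem_range.mp hj),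
            sum_congr rfl fun j _ => hA j]
          simp [U, pow_succ']
      _ = _ := by
          rw [sum_range_succ' _ (N + 1)]
          simp only [qBinom_succ_succ, Nat.add_sub_add_right, mul_add, add_mul, sum_add_distrib,
            A, B]
          simp only [Nat.choose_zero_succ, pow_zero, qBinom_zero_right, mul_one, tsub_zero, one_mul]
          ring

theorem qBinom_mul_qPoch_mul_qPoch (q : R) :
    ∀ {N j : ℕ}, j ≤ N → qBinom q N j * qPoch q j * qPoch q (N - j) = qPoch q N
  | N, 0, _ => by simp [qPoch]
  | N + 1, j + 1, hj => by
    rcases (Nat.le_of_succ_le_succ hj).eq_or_lt with rfl | hjN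
    · simp [qPoch]
    have h₁ := qBinom_mul_qPoch_mul_qPoch q (N := N) (j := j) hjN.le
    have h₂ := qBinom_mul_qPoch_mul_qPoch q (N := N) (j := j + 1) hjN
    have hq : q ^ (j + 1) * q ^ (N - (j + 1) + 1) = q ^ (N + 1) := by
      rw [← pow_add]; congr 1; omega
    rw [show N - j = N - (j + 1) + 1 by omega, qPoch_succ] at h₁
    rw [qPoch_succ] at h₂
    rw [qBinom_succ_succ, qPoch_succ, qPoch_succ, show N + 1 - (j + 1) = N - (j + 1) + 1 by omega,
      qPoch_succ]
    linear_combination (1 - q ^ (j + 1)) * h₁ + q ^ (j + 1) * (1 - q ^ (N - (j + 1) + 1)) * h₂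
      - qPoch q N * hq

theorem qBinom_X_pow_mul_qPochInf_smodEq {h : ℕ} (hh : 1 ≤ h) {N j : ℕ} (hj : j ≤ N) :
    qBinom (X ^ h : R⟦X⟧) N j * qPochInf R h ≡ 1
      [SMOD Ideal.span {X ^ (min j (N - j) + 1)}] := by
  obtain ⟨u, hu⟩ := isUnit_qPochInf (R := R) hh
  have approx : ∀ M, min j (N - j) ≤ M → qPochInf R h ≡ qPoch (X ^ h) M
      [SMOD Ideal.span {X ^ (min j (N - j) + 1)}] := fun M hM =>
    smodEq_X_pow_mono (by omega) (qPochInf_smodEq hh M)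
  have key : qBinom (X ^ h : R⟦X⟧) N j * qPochInf R h * qPochInf R h ≡ qPochInf R h
      [SMOD Ideal.span {X ^ (min j (N - j) + 1)}] :=
    ((SModEq.rfl.mul (approx j (by omega))).mul (approx (N - j) (by omega))).trans <| by
      rw [qBinom_mul_qPoch_mul_qPoch _ hj]; exact (approx N (by omega)).symm
  rw [← hu] at key ⊢
  simpa [mul_assoc] using key.mul (SModEq.refl (↑u⁻¹ : R⟦X⟧))

end GaussianBinomial

section Lacunary

variable {R : Type*} [CommRing R]

/-- Only `k ≤ n` contribute to the coefficient of `Xⁿ`, so this is `∑ₖ c k X^(e k)` as long as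
`k ≤ e k`, e.g. for strictly monotone `e`. -/
def lacunary (e : ℕ → ℕ) (c : ℕ → R) : R⟦X⟧ :=
  mk fun n => ∑ k ∈ range (n + 1) with e k = n, c k

variable {e : ℕ → ℕ} (c : ℕ → R)

theorem lacunary_smodEq (he : StrictMono e) {M N : ℕ} (hM : ∀ k, M ≤ k → N ≤ e k) :
    lacunary e c ≡ ∑ k ∈ range M, C (c k) * X ^ e k [SMOD Ideal.span {X ^ N}] := by
  refine smodEq_X_pow_iff.mpr fun m hm => ?_
  simp only [lacunary, coeff_mk, map_sum, coeff_C_mul_X_pow, ← sum_filter]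
  refine sum_congr (Finset.ext fun k => ?_) fun _ _ => rfl
  simp only [mem_filter, mem_range]
  constructor
  · rintro ⟨-, rfl⟩
    exact ⟨by_contra fun hk => (hM k (not_lt.mp hk)).not_gt hm, rfl⟩
  · rintro ⟨-, rfl⟩
    exact ⟨Nat.lt_succ_of_le (he.id_le k), rfl⟩

theorem lacunary_smodEq_self (he : StrictMono e) (N : ℕ) :
    lacunary e c ≡ ∑ k ∈ range N, C (c k) * X ^ e k [SMOD Ideal.span {X ^ N}] :=
  lacunary_smodEq c he fun k hk => hk.trans (he.id_le k)

theorem sum_range_two_mul {M : Type*} [AddCommMonoid M] (g : ℕ → M) (N : ℕ) :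
    ∑ k ∈ range (2 * N), g k = ∑ k ∈ range N, (g (2 * k) + g (2 * k + 1)) := by
  induction N with
  | zero => simp
  | succ N ih =>
    rw [show 2 * (N + 1) = 2 * N + 1 + 1 by ring, sum_range_succ, sum_range_succ, ih,
      sum_range_succ, add_assoc]

theorem lacunary_even_add_odd (he : StrictMono e) :
    lacunary e c = lacunary (fun k => e (2 * k)) (fun k => c (2 * k)) +
      lacunary (fun k => e (2 * k + 1)) (fun k => c (2 * k + 1)) := by
  refine eq_of_forall_smodEq_X_pow fun N => ?_
  have he₀ : StrictMono fun k => e (2 * k) := he.comp fun a b h => by omega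
  have he₁ : StrictMono fun k => e (2 * k + 1) := he.comp fun a b h => by omega
  refine (lacunary_smodEq c he (M := 2 * N) fun k hk => by
    have : k ≤ e k := he.id_le k; omega).trans ?_
  rw [sum_range_two_mul, sum_add_distrib]
  exact ((lacunary_smodEq_self _ he₀ N).add (lacunary_smodEq_self _ he₁ N)).symm

theorem X_mul_lacunary (he : StrictMono e) :
    X * lacunary e c = lacunary (fun k => e k + 1) c := by
  refine eq_of_forall_smodEq_X_pow fun N => ?_
  have he' : StrictMono fun k => e k + 1 := fun a b h => Nat.add_lt_add_right (he h) 1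
  refine (SModEq.rfl.mul (lacunary_smodEq_self c he N)).trans ?_
  rw [mul_sum]
  refine SModEq.trans ?_ (lacunary_smodEq_self c he' N).symm
  simp only [pow_succ]
  exact SModEq.sum fun k _ => by rw [mul_left_comm, mul_comm X]; exact SModEq.rfl

theorem expand_lacunary (he : StrictMono e) {p : ℕ} (hp : p ≠ 0) :
    expand p hp (lacunary e c) = lacunary (fun k => p * e k) c := by
  refine eq_of_forall_smodEq_X_pow fun N => ?_
  have he' : StrictMono fun k => p * e k := fun a b h =>
    Nat.mul_lt_mul_of_pos_left (he h) (Nat.pos_of_ne_zero hp)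
  refine (smodEq_expand hp (lacunary_smodEq_self c he N)).trans ?_
  simp only [map_sum, map_mul, map_pow, expand_C, expand_X, ← pow_mul]
  exact (lacunary_smodEq_self c he' N).symm

theorem lacunary_neg : lacunary e (fun k => -c k) = -lacunary e c := by
  ext n
  simp [lacunary, sum_neg_distrib]

end Lacunary

theorem cast_choose_two_mul_two (m : ℕ) : (m.choose 2 : ℤ) * 2 = m * (m - 1) := by
  rcases m with _ | m
  · simp
  · have h := Nat.add_one_mul_choose_eq m 1
    rw [Nat.choose_one_right] at h
    push_cast
    linear_combination (norm := (push_cast; ring)) (congrArg (Nat.cast : ℕ → ℤ) h).symm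

theorem prod_range_pow {M : Type*} [CommMonoid M] (a : M) (n : ℕ) :
    ∏ k ∈ range n, a ^ k = a ^ n.choose 2 := by
  rw [prod_pow_eq_pow_sum, sum_range_id, Nat.choose_two_right]

theorem strictMono_choose_two_succ : StrictMono fun t => (t + 1).choose 2 :=
  strictMono_nat_of_lt_succ fun t => by simp only [choose_two_succ (t + 1)]; omega

theorem le_choose_two_add_one : ∀ t : ℕ, t ≤ t.choose 2 + 1
  | 0 => by simp
  | t + 1 => by rw [choose_two_succ]; omega

theorem strictMono_succ_sq : StrictMono fun k : ℕ => (k + 1) ^ 2 :=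
  fun _ _ h => Nat.pow_lt_pow_left (Nat.succ_lt_succ h) two_ne_zero

/-- Ramanujan's `ψ(q) = ∑_{t ≥ 0} q^{t(t+1)/2}`. -/
def psi : ℤ⟦X⟧ := lacunary (fun t => (t + 1).choose 2) 1

def sqSum : ℤ⟦X⟧ := lacunary (fun k => (k + 1) ^ 2) 1

def phiNegTail : ℤ⟦X⟧ := lacunary (fun k => (k + 1) ^ 2) fun k => (-1) ^ (k + 1)

/-- Ramanujan's `φ(-q) = ∑_{k ∈ ℤ} (-1)^k q^{k²}`. -/
def phiNeg : ℤ⟦X⟧ := 1 + 2 * phiNegTail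

section Psi

theorem prod_range_two_mul_X_pow_add_X_pow {R : Type*} [CommRing R] (n : ℕ) :
    ∏ k ∈ range (2 * n), ((X : R⟦X⟧) ^ n + X ^ k) =
      X ^ (n.choose 2 + n * n) *
        ((∏ i ∈ range n, (1 + X ^ (i + 1))) * ∏ i ∈ range n, (1 + X ^ i)) := by
  rw [two_mul, prod_range_add, ← prod_range_reflect (fun k => (X : R⟦X⟧) ^ n + X ^ k)]
  have h₁ : ∀ k ∈ range n, (X : R⟦X⟧) ^ n + X ^ (n - 1 - k) = X ^ (n - 1 - k) * (1 + X ^ (k + 1)) :=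
    fun k hk => by
      rw [mul_add, mul_one, ← pow_add, show n - 1 - k + (k + 1) = n by
        have := mem_range.mp hk; omega, add_comm]
  have h₂ : ∀ i ∈ range n, (X : R⟦X⟧) ^ n + X ^ (n + i) = X ^ n * (1 + X ^ i) :=
    fun i _ => by rw [mul_add, mul_one, pow_add]
  rw [prod_congr rfl h₁, prod_congr rfl h₂, prod_mul_distrib, prod_mul_distrib, prod_const,
    card_range, prod_range_reflect (fun k => (X : R⟦X⟧) ^ k), prod_range_pow, pow_add, ← pow_mul]
  ring

/-- Cauchy's theorem for `q = X`, `N = 2n`, `w = Xⁿ`, `z = 1`, divided by `X^(C(n,2) + n²)` and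
indexed by `t = j - n` resp. `t = n - 1 - j`; it tends to `2 ψ(q) / f₁`. -/
def psiApprox (n : ℕ) : ℤ⟦X⟧ :=
  ∑ t ∈ range (n + 1), X ^ t.choose 2 * qBinom X (2 * n) (n + t) +
    ∑ t ∈ range n, X ^ (t + 2).choose 2 * qBinom X (2 * n) (n - 1 - t)

theorem psiApprox_eq (n : ℕ) :
    psiApprox n = (∏ i ∈ range n, (1 + X ^ (i + 1))) * ∏ i ∈ range n, (1 + X ^ i) := by
  have hq := prod_add_mul_pow_eq_sum (X : ℤ⟦X⟧) (2 * n) (X ^ n) 1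
  simp only [one_mul, one_pow, mul_one] at hq
  rw [prod_range_two_mul_X_pow_add_X_pow] at hq
  refine (mul_left_cancel₀ (pow_ne_zero (n.choose 2 + n * n) X_ne_zero) (hq.trans ?_)).symm
  rw [psiApprox, show 2 * n + 1 = n + (n + 1) by ring, sum_range_add, ← sum_range_reflect _ n,
    mul_add, mul_sum, mul_sum, add_comm]
  congr 1 <;> refine sum_congr rfl fun t ht => ?_ <;> have := mem_range.mp ht <;>
    rw [← pow_mul, mul_right_comm, ← pow_add, ← mul_assoc, ← pow_add] <;> congr 2 <;>
    refine Nat.eq_of_mul_eq_mul_right two_pos ?_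
  · have h₁ := cast_choose_two_mul_two (n + t)
    have h₂ := cast_choose_two_mul_two n
    have h₃ := cast_choose_two_mul_two t
    zify [show n + t ≤ 2 * n by omega]
    push_cast at h₁
    linear_combination h₁ - h₂ - h₃
  · rw [show n - 1 - t = n - (t + 1) by omega]
    have h₁ := cast_choose_two_mul_two (n - (t + 1))
    have h₂ := cast_choose_two_mul_two n
    have h₃ := cast_choose_two_mul_two (t + 2)
    zify [show n - (t + 1) ≤ 2 * n by omega, show t + 1 ≤ n by omega] at h₁ ⊢
    push_cast at h₁ h₃
    linear_combination h₁ - h₂ - h₃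

theorem psiApprox_mul_qPochInf_smodEq (n : ℕ) :
    psiApprox n * qPochInf ℤ 1 ≡ 2 * psi [SMOD Ideal.span {X ^ n}] := by
  have hG : ∀ {e j : ℕ}, j ≤ 2 * n → n ≤ e + min j (2 * n - j) + 1 →
      X ^ e * qBinom (X : ℤ⟦X⟧) (2 * n) j * qPochInf ℤ 1 ≡ X ^ e [SMOD Ideal.span {X ^ n}] :=
    fun {e j} hj hn => by
      have := X_pow_mul_smodEq (qBinom_X_pow_mul_qPochInf_smodEq (R := ℤ) le_rfl hj) e
      rw [pow_one, mul_one, ← mul_assoc] at this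
      exact smodEq_X_pow_mono (by omega) this
  have hsum : ∑ t ∈ range (n + 1), (X : ℤ⟦X⟧) ^ t.choose 2 + ∑ t ∈ range n, X ^ (t + 2).choose 2 =
      2 * ∑ t ∈ range n, X ^ (t + 1).choose 2 + X ^ (n + 1).choose 2 := by
    have e₁ : ∑ t ∈ range (n + 1), (X : ℤ⟦X⟧) ^ t.choose 2 =
        ∑ t ∈ range n, X ^ (t + 1).choose 2 + 1 := by
      rw [sum_range_succ']; simp
    have e₂ : ∑ t ∈ range (n + 1), (X : ℤ⟦X⟧) ^ (t + 1).choose 2 =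
        ∑ t ∈ range n, X ^ (t + 2).choose 2 + 1 := by
      rw [sum_range_succ']; simp
    linear_combination e₁ - e₂ + sum_range_succ (fun t => (X : ℤ⟦X⟧) ^ (t + 1).choose 2) n
  have hpsi : psi ≡ ∑ t ∈ range n, (X : ℤ⟦X⟧) ^ (t + 1).choose 2 [SMOD Ideal.span {X ^ n}] := by
    simpa [psi] using lacunary_smodEq_self (1 : ℕ → ℤ) strictMono_choose_two_succ n
  rw [psiApprox, add_mul, sum_mul, sum_mul]
  refine ((SModEq.sum fun t ht => hG (by have := mem_range.mp ht; omega) ?_).add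
    (SModEq.sum fun t ht => hG (by omega) ?_)).trans ?_
  · have := le_choose_two_add_one t
    have := mem_range.mp ht
    omega
  · have := le_choose_two_add_one (t + 1)
    rw [choose_two_succ (t + 1)]
    have := mem_range.mp ht
    omega
  rw [hsum]
  simpa using ((SModEq.refl 2).mul hpsi).symm.add
    (X_pow_smodEq_zero (by have := le_choose_two_add_one (n + 1); omega))

theorem qPochInf_mul_psi : qPochInf ℤ 1 * psi = qPochInf ℤ 2 ^ 2 := by
  have h2 : (2 : ℤ⟦X⟧) ≠ 0 := fun h => by
    simpa [map_ofNat] using congrArg constantCoeff h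
  refine mul_left_cancel₀ h2 (eq_of_forall_smodEq_X_pow fun N => ?_)
  have hL := psiApprox_mul_qPochInf_smodEq (N + 1)
  rw [psiApprox_eq, prod_range_succ' (fun i => (1 : ℤ⟦X⟧) + X ^ i), pow_zero, one_add_one_eq_two]
    at hL
  have hP₁ := smodEq_X_pow_mono (Nat.le_succ (N + 1))
    (prod_one_add_X_pow_mul_qPochInf_smodEq (R := ℤ) (N + 1))
  have hP₀ := prod_one_add_X_pow_mul_qPochInf_smodEq (R := ℤ) N
  refine smodEq_X_pow_mono (Nat.le_succ N) ?_
  rw [SModEq.idealQuotientMk] at hL hP₁ hP₀ ⊢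
  simp only [map_mul, map_pow, map_ofNat] at hL hP₁ hP₀ ⊢
  linear_combination (-Ideal.Quotient.mk _ (qPochInf ℤ 1)) * hL
    + 2 * Ideal.Quotient.mk _ (∏ i ∈ range N, (1 + X ^ (i + 1))) *
      Ideal.Quotient.mk _ (qPochInf ℤ 1) * hP₁
    + 2 * Ideal.Quotient.mk _ (qPochInf ℤ 2) * hP₀

end Psi

section PhiNeg

theorem prod_range_X_pow_sub_X_sq_pow {R : Type*} [CommRing R] (n : ℕ) :
    ∏ k ∈ range (2 * n + 2), ((X : R⟦X⟧) ^ (2 * n + 1) + -1 * (X ^ 2) ^ k) =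
      (-1) ^ (n + 1) * X ^ ((3 * n + 1) * (n + 1)) *
        (∏ i ∈ range (n + 1), (1 - X ^ (2 * i + 1))) ^ 2 := by
  rw [show 2 * n + 2 = (n + 1) + (n + 1) by ring, prod_range_add,
    ← prod_range_reflect (fun k => (X : R⟦X⟧) ^ (2 * n + 1) + -1 * (X ^ 2) ^ k)]
  have h₁ : ∀ k ∈ range (n + 1), (X : R⟦X⟧) ^ (2 * n + 1) + -1 * (X ^ 2) ^ (n + 1 - 1 - k) =
      -1 * (X ^ 2) ^ (n - k) * (1 - X ^ (2 * k + 1)) := fun k hk => by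
    rw [← pow_mul, ← pow_mul, mul_assoc, mul_sub, mul_one, ← pow_add,
      show 2 * (n - k) + (2 * k + 1) = 2 * n + 1 by have := mem_range.mp hk; omega,
      Nat.add_sub_cancel]
    ring
  have h₂ : ∀ i ∈ range (n + 1), (X : R⟦X⟧) ^ (2 * n + 1) + -1 * (X ^ 2) ^ (n + 1 + i) =
      X ^ (2 * n + 1) * (1 - X ^ (2 * i + 1)) := fun i _ => by
    rw [← pow_mul, mul_sub, mul_one, ← pow_add,
      show 2 * (n + 1 + i) = 2 * n + 1 + (2 * i + 1) by ring]
    ring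
  have hrefl : ∏ k ∈ range (n + 1), ((X : R⟦X⟧) ^ 2) ^ (n - k) = (X ^ 2) ^ (n + 1).choose 2 :=
    (prod_range_reflect (fun k => ((X : R⟦X⟧) ^ 2) ^ k) (n + 1)).trans (prod_range_pow _ _)
  have hexp : 2 * (n + 1).choose 2 + (2 * n + 1) * (n + 1) = (3 * n + 1) * (n + 1) := by
    have h := cast_choose_two_mul_two (n + 1)
    zify
    push_cast at h
    linear_combination h
  have hX : (X : R⟦X⟧) ^ (2 * (n + 1).choose 2 + (2 * n + 1) * (n + 1)) =
      (X ^ 2) ^ (n + 1).choose 2 * (X ^ (2 * n + 1)) ^ (n + 1) := by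
    rw [pow_add, pow_mul, pow_mul]
  rw [prod_congr rfl h₁, prod_congr rfl h₂, prod_mul_distrib, prod_mul_distrib, prod_mul_distrib,
    prod_const, prod_const, card_range, hrefl, ← hexp, hX]
  ring

/-- Cauchy's theorem for `q = X²`, `N = 2n + 2`, `w = X^(2n+1)`, `z = -1`, divided by
`(-1)^(n+1) X^((3n+1)(n+1))` and indexed by `t = j - (n + 1)` resp. `t = n - j`; it tends to
`φ(-q) / f₂`. -/
def phiNegApprox (n : ℕ) : ℤ⟦X⟧ :=
  ∑ t ∈ range (n + 2), (-1) ^ t * X ^ (t ^ 2) * qBinom (X ^ 2) (2 * n + 2) (n + 1 + t) +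
    ∑ t ∈ range (n + 1), (-1) ^ (t + 1) * X ^ ((t + 1) ^ 2) * qBinom (X ^ 2) (2 * n + 2) (n - t)

theorem phiNegApprox_eq (n : ℕ) :
    phiNegApprox n = (∏ i ∈ range (n + 1), (1 - X ^ (2 * i + 1))) ^ 2 := by
  have hq := prod_add_mul_pow_eq_sum ((X : ℤ⟦X⟧) ^ 2) (2 * n + 2) (X ^ (2 * n + 1)) (-1)
  rw [prod_range_X_pow_sub_X_sq_pow] at hq
  have hne : (-1 : ℤ⟦X⟧) ^ (n + 1) * X ^ ((3 * n + 1) * (n + 1)) ≠ 0 :=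
    mul_ne_zero (pow_ne_zero _ (neg_ne_zero.mpr one_ne_zero)) (pow_ne_zero _ X_ne_zero)
  refine (mul_left_cancel₀ hne (hq.trans ?_)).symm
  rw [phiNegApprox, show 2 * n + 2 + 1 = (n + 1) + (n + 2) by ring, sum_range_add,
    ← sum_range_reflect _ (n + 1), mul_add, mul_sum, mul_sum, add_comm]
  congr 1 <;> refine sum_congr rfl fun t ht => ?_ <;> have := mem_range.mp ht
  · have hexp : (X : ℤ⟦X⟧) ^ (2 * (n + 1 + t).choose 2) *
          X ^ ((2 * n + 1) * (2 * n + 2 - (n + 1 + t))) =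
        X ^ ((3 * n + 1) * (n + 1)) * X ^ (t ^ 2) := by
      rw [← pow_add, ← pow_add]
      congr 1
      have h := cast_choose_two_mul_two (n + 1 + t)
      zify [show n + 1 + t ≤ 2 * n + 2 by omega]
      push_cast at h
      linear_combination h
    rw [← pow_mul, ← pow_mul, pow_add (-1 : ℤ⟦X⟧)]
    linear_combination
      (-1) ^ (n + 1) * (-1) ^ t * qBinom (X ^ 2 : ℤ⟦X⟧) (2 * n + 2) (n + 1 + t) * hexp
  · rw [show n + 1 - 1 - t = n - t by omega]
    have hexp : (X : ℤ⟦X⟧) ^ (2 * (n - t).choose 2) * X ^ ((2 * n + 1) * (2 * n + 2 - (n - t))) =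
        X ^ ((3 * n + 1) * (n + 1)) * X ^ ((t + 1) ^ 2) := by
      rw [← pow_add, ← pow_add]
      congr 1
      have h := cast_choose_two_mul_two (n - t)
      zify [show n - t ≤ 2 * n + 2 by omega, show t ≤ n by omega] at h ⊢
      linear_combination h
    have hsign : (-1 : ℤ⟦X⟧) ^ (n - t) = (-1) ^ (n + 1) * (-1) ^ (t + 1) := by
      rw [← pow_add, show n + 1 + (t + 1) = n - t + 2 * (t + 1) by omega, pow_add, pow_mul]
      simp
    rw [← pow_mul, ← pow_mul, hsign]
    linear_combination
      (-1) ^ (n + 1) * (-1) ^ (t + 1) * qBinom (X ^ 2 : ℤ⟦X⟧) (2 * n + 2) (n - t) * hexp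

theorem phiNegApprox_mul_qPochInf_smodEq (n : ℕ) :
    phiNegApprox n * qPochInf ℤ 2 ≡ phiNeg [SMOD Ideal.span {X ^ (n + 1)}] := by
  have hG : ∀ (c : ℤ⟦X⟧) {e j : ℕ}, j ≤ 2 * n + 2 → n ≤ e + min j (2 * n + 2 - j) →
      c * X ^ e * qBinom (X ^ 2 : ℤ⟦X⟧) (2 * n + 2) j * qPochInf ℤ 2 ≡ c * X ^ e
        [SMOD Ideal.span {X ^ (n + 1)}] := fun c {e j} hj hn => by
    have := (SModEq.refl c).mul (X_pow_mul_smodEq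
      (qBinom_X_pow_mul_qPochInf_smodEq (R := ℤ) one_le_two hj) e)
    rw [mul_one, ← mul_assoc, ← mul_assoc] at this
    exact smodEq_X_pow_mono (by omega) this
  have htail : phiNegTail ≡ ∑ t ∈ range (n + 1), (-1) ^ (t + 1) * (X : ℤ⟦X⟧) ^ ((t + 1) ^ 2)
      [SMOD Ideal.span {X ^ (n + 1)}] := by
    simpa [phiNegTail] using
      lacunary_smodEq_self (fun k => (-1 : ℤ) ^ (k + 1)) strictMono_succ_sq (n + 1)
  rw [phiNegApprox, add_mul, sum_mul, sum_mul]
  refine ((SModEq.sum fun t ht => hG _ (by have := mem_range.mp ht; omega) ?_).add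
    (SModEq.sum fun t ht => hG _ (by omega) ?_)).trans ?_
  · have := mem_range.mp ht
    have := Nat.le_self_pow two_ne_zero t
    omega
  · have := mem_range.mp ht
    have := Nat.le_self_pow two_ne_zero (t + 1)
    omega
  rw [sum_range_succ', show (-1 : ℤ⟦X⟧) ^ 0 * X ^ (0 ^ 2) = 1 by simp, phiNeg, add_comm 1,
    add_right_comm, ← two_mul]
  exact ((SModEq.refl 2).mul htail.symm).add (SModEq.refl 1)

theorem qPochInf_sq : qPochInf ℤ 1 ^ 2 = qPochInf ℤ 2 * phiNeg := by
  refine eq_of_forall_smodEq_X_pow fun N => smodEq_X_pow_mono (Nat.le_succ N) ?_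
  have hL := phiNegApprox_mul_qPochInf_smodEq N
  rw [phiNegApprox_eq] at hL
  have hO := smodEq_X_pow_mono (Nat.le_succ (N + 1))
    (prod_one_sub_X_pow_odd_mul_qPochInf_smodEq (R := ℤ) (N + 1))
  rw [SModEq.idealQuotientMk] at hL hO ⊢
  simp only [map_mul, map_pow] at hL hO ⊢
  linear_combination (-(Ideal.Quotient.mk _ (∏ i ∈ range (N + 1), (1 - X ^ (2 * i + 1))) *
      Ideal.Quotient.mk _ (qPochInf ℤ 2) + Ideal.Quotient.mk _ (qPochInf ℤ 1))) * hO
    + Ideal.Quotient.mk _ (qPochInf ℤ 2) * hL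

end PhiNeg

theorem qPochInf_ne_zero {h : ℕ} (hh : 1 ≤ h) : qPochInf ℤ h ≠ 0 :=
  (isUnit_qPochInf hh).ne_zero

theorem psi_mul_phiNeg : psi * phiNeg = qPochInf ℤ 1 * qPochInf ℤ 2 := by
  refine mul_left_cancel₀ (mul_ne_zero (qPochInf_ne_zero le_rfl) (qPochInf_ne_zero one_le_two)) ?_
  linear_combination qPochInf ℤ 2 * phiNeg * qPochInf_mul_psi - qPochInf ℤ 2 ^ 2 * qPochInf_sq

theorem qPochInf_two_sq : qPochInf ℤ 2 ^ 2 = qPochInf ℤ 4 * expand 2 two_ne_zero phiNeg := by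
  simpa [expand_qPochInf] using congrArg (expand 2 two_ne_zero) qPochInf_sq

theorem mk_mul_phiNeg_mul_expand_phiNeg_pow {abar : ℕ → ℕ → ℕ} (habar : IsGenOvercubic abar)
    {c : ℕ} (hc : 1 ≤ c) :
    (mk fun n => (abar c n : ℤ)) * phiNeg * expand 2 two_ne_zero phiNeg ^ (c - 1) = 1 := by
  obtain ⟨c, rfl⟩ := Nat.exists_eq_add_of_le' hc
  have H := habar (c + 1) hc
  rw [qPochInf_sq, pow_mul, qPochInf_two_sq, Nat.add_sub_cancel] at H
  have hφ₂ : expand 2 two_ne_zero phiNeg ≠ 0 := right_ne_zero_of_mul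
    (qPochInf_two_sq ▸ pow_ne_zero 2 (qPochInf_ne_zero one_le_two))
  refine mul_right_cancel₀ (mul_ne_zero (mul_ne_zero (qPochInf_ne_zero one_le_two)
    (pow_ne_zero (c + 1) (qPochInf_ne_zero (by norm_num : 1 ≤ 4)))) hφ₂) ?_
  rw [Nat.add_sub_cancel]
  linear_combination H + qPochInf ℤ 4 ^ c * qPochInf ℤ 2 * qPochInf_two_sq

theorem lacunary_odd_sq :
    lacunary (fun i => (2 * i + 1) ^ 2) (1 : ℕ → ℤ) = X * expand 8 (by norm_num) psi := by
  rw [psi, expand_lacunary _ strictMono_choose_two_succ,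
    X_mul_lacunary _ (strictMono_choose_two_succ.const_mul (by norm_num))]
  congr 1
  funext i
  have h := cast_choose_two_mul_two (i + 1)
  zify
  push_cast at h
  linear_combination -4 * h

theorem lacunary_even_sq (c : ℕ → ℤ) :
    lacunary (fun i => (2 * i + 1 + 1) ^ 2) c =
      expand 4 (by norm_num) (lacunary (fun k => (k + 1) ^ 2) c) := by
  rw [expand_lacunary _ strictMono_succ_sq]
  congr 1
  funext i
  ring

theorem phiNegTail_eq :
    phiNegTail = expand 4 (by norm_num) sqSum - X * expand 8 (by norm_num) psi := by
  have hodd : lacunary (fun k => (2 * k + 1) ^ 2) (fun k => (-1 : ℤ) ^ (2 * k + 1)) =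
      -(X * expand 8 (by norm_num) psi) := by
    rw [← lacunary_odd_sq, ← lacunary_neg]
    congr 1
    funext k
    simp [pow_succ, pow_mul]
  have heven : lacunary (fun k => (2 * k + 1 + 1) ^ 2) (fun k => (-1 : ℤ) ^ (2 * k + 1 + 1)) =
      expand 4 (by norm_num) sqSum := by
    rw [sqSum, ← lacunary_even_sq]
    congr 1
    funext k
    simp [pow_succ, pow_mul]
  rw [phiNegTail, lacunary_even_add_odd _ strictMono_succ_sq, hodd, heven]
  ring

theorem sqSum_eq : sqSum = expand 4 (by norm_num) sqSum + X * expand 8 (by norm_num) psi := by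
  conv_lhs => rw [sqSum, lacunary_even_add_odd _ strictMono_succ_sq]
  rw [add_comm]
  exact congrArg₂ (· + ·) (lacunary_even_sq 1) lacunary_odd_sq

section CharEight

variable {S : Type*} [CommRing S]

theorem one_add_two_mul_mul_eq_one (h8 : (8 : S) = 0) (x : S) :
    (1 + 2 * x) * (1 - 2 * x + 4 * x ^ 2) = 1 := by
  linear_combination x ^ 3 * h8

theorem two_mul_pow_two_mul_add_one (h8 : (8 : S) = 0) (x : S) (m : ℕ) :
    2 * (1 - 2 * x + 4 * x ^ 2) ^ (2 * m + 1) = 2 * (1 - 2 * x + 4 * x ^ 2) := by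
  set w := 1 - 2 * x + 4 * x ^ 2
  have hw : 2 * w ^ 2 = 2 := by linear_combination (-x + 3 * x ^ 2 - 4 * x ^ 3 + 4 * x ^ 4) * h8
  induction m with
  | zero => ring
  | succ m ih =>
    rw [show 2 * (m + 1) + 1 = 2 * m + 1 + 2 by ring, pow_add]
    linear_combination w ^ 2 * ih + w * hw

/-- The mod-8 inverse of `(1 + 2s)(1 + 2t)^(2m+1)` once `s = e - o` is split into its even and
odd parts. -/
theorem eq_of_mul_one_add_two_mul_mul_pow (h8 : (8 : S) = 0) {a s t e o e' o' r : S} {m : ℕ}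
    (ha : a * (1 + 2 * s) * (1 + 2 * t) ^ (2 * m + 1) = 1) (hs : s = e - o) (ht : t = e' - o')
    (hr : 4 * e' = 4 * r) :
    a = (1 - 2 * e + 4 * e ^ 2 + 4 * o ^ 2) * (1 - 2 * t + 4 * t ^ 2) ^ (2 * m + 1) +
      2 * o * (1 + 2 * r) + 4 * (o * o') := by
  have haW : a = (1 - 2 * s + 4 * s ^ 2) * (1 - 2 * t + 4 * t ^ 2) ^ (2 * m + 1) :=
    calc a = a * ((1 + 2 * s) * (1 - 2 * s + 4 * s ^ 2)) *
          ((1 + 2 * t) * (1 - 2 * t + 4 * t ^ 2)) ^ (2 * m + 1) := by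
          rw [one_add_two_mul_mul_eq_one h8, one_add_two_mul_mul_eq_one h8, one_pow, mul_one,
            mul_one]
      _ = a * (1 + 2 * s) * (1 + 2 * t) ^ (2 * m + 1) *
          ((1 - 2 * s + 4 * s ^ 2) * (1 - 2 * t + 4 * t ^ 2) ^ (2 * m + 1)) := by
          rw [mul_pow]; ring
      _ = _ := by rw [ha, one_mul]
  have hW := two_mul_pow_two_mul_add_one h8 t m
  generalize (1 - 2 * t + 4 * t ^ 2) ^ (2 * m + 1) = W at haW hW ⊢
  subst hs ht
  linear_combination haW + o * hW - o * hr + (o * (e' - o') ^ 2 - e * o * W - o * r) * h8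

end CharEight

theorem coeff_X_mul_expand_mul_expand_eq_zero {R : Type*} [CommRing R] (f : R⟦X⟧) (n : ℕ) :
    coeff (4 * n + 1)
      (X * expand 8 (by norm_num) f * expand 2 two_ne_zero (X * expand 8 (by norm_num) f)) = 0 := by
  have h₈ : expand 8 (by norm_num) f = expand 4 (by norm_num) (expand 2 two_ne_zero f) :=
    expand_mul 4 (by norm_num) 2 two_ne_zero f
  have h₁₆ : expand 2 two_ne_zero (expand 8 (by norm_num) f) =
      expand 4 (by norm_num) (expand 4 (by norm_num) f) :=
    (expand_mul 2 two_ne_zero 8 (by norm_num) f).symm.trans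
      (expand_mul 4 (by norm_num) 4 (by norm_num) f)
  have h : X * expand 8 (by norm_num) f * expand 2 two_ne_zero (X * expand 8 (by norm_num) f) =
      X ^ 3 * expand 4 (by norm_num) (expand 2 two_ne_zero f * expand 4 (by norm_num) f) := by
    rw [map_mul, expand_X, h₁₆, h₈, map_mul]
    ring
  rw [h, coeff_X_pow_mul']
  split_ifs
  · exact coeff_expand_of_not_dvd _ _ _ (by omega)
  · rfl

theorem eight_eq_zero : (8 : (ZMod 8)⟦X⟧) = 0 := by
  rw [← map_ofNat (C (R := ZMod 8)) 8]
  exact (map_eq_zero_iff _ C_injective).mpr rfl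

local notation "π₈" => PowerSeries.map (Int.castRingHom (ZMod 8))

theorem map_phiNegTail_eq :
    π₈ phiNegTail = expand 4 (by norm_num) (π₈ sqSum) - X * expand 8 (by norm_num) (π₈ psi) := by
  simp only [phiNegTail_eq, map_sub, map_mul, map_X, map_expand]

theorem four_mul_map_sqSum : 4 * π₈ sqSum = 4 * π₈ phiNegTail := by
  have h : sqSum = phiNegTail + 2 * (X * expand 8 (by norm_num) psi) := by
    rw [phiNegTail_eq]
    linear_combination sqSum_eq
  rw [h, map_add, map_mul, map_ofNat]
  linear_combination π₈ (X * expand 8 (by norm_num) psi) * eight_eq_zero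

theorem map_eq_of_mul_phiNeg {A : ℤ⟦X⟧} {m : ℕ}
    (hA : A * phiNeg * expand 2 two_ne_zero phiNeg ^ (2 * m + 1) = 1) :
    π₈ A = (1 - 2 * expand 4 (by norm_num) (π₈ sqSum) + 4 * expand 4 (by norm_num) (π₈ sqSum) ^ 2 +
          4 * (X * expand 8 (by norm_num) (π₈ psi)) ^ 2) *
        (1 - 2 * expand 2 two_ne_zero (π₈ phiNegTail) +
          4 * expand 2 two_ne_zero (π₈ phiNegTail) ^ 2) ^ (2 * m + 1) +
      2 * (X * expand 8 (by norm_num) (π₈ psi)) * expand 8 (by norm_num) (π₈ phiNeg) +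
      4 * (X * expand 8 (by norm_num) (π₈ psi) *
        expand 2 two_ne_zero (X * expand 8 (by norm_num) (π₈ psi))) := by
  have hφ : π₈ phiNeg = 1 + 2 * π₈ phiNegTail := by simp [phiNeg, map_ofNat]
  have ha : π₈ A * (1 + 2 * π₈ phiNegTail) *
      (1 + 2 * expand 2 two_ne_zero (π₈ phiNegTail)) ^ (2 * m + 1) = 1 := by
    simpa [map_expand, hφ, map_ofNat] using congrArg π₈ hA
  have h4 : 4 * expand 2 two_ne_zero (expand 4 (by norm_num) (π₈ sqSum)) =
      4 * expand 8 (by norm_num) (π₈ phiNegTail) := by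
    simpa only [map_mul, map_ofNat, ← expand_mul 2 two_ne_zero 4 (by norm_num)] using
      congrArg (expand 8 (by norm_num)) four_mul_map_sqSum
  rw [hφ, map_add, map_one, map_mul, map_ofNat]
  exact eq_of_mul_one_add_two_mul_mul_pow eight_eq_zero ha map_phiNegTail_eq
    (by rw [map_phiNegTail_eq, map_sub]) h4

theorem coeff_four_mul_add_one_eq {A : ℤ⟦X⟧} {m : ℕ}
    (hA : A * phiNeg * expand 2 two_ne_zero phiNeg ^ (2 * m + 1) = 1) (n : ℕ) :
    ((coeff (4 * n + 1) A : ℤ) : ZMod 8) =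
      2 * ((coeff (4 * n) (expand 8 (by norm_num) (psi * phiNeg)) : ℤ) : ZMod 8) := by
  set q := π₈ sqSum
  set ψ := π₈ psi
  have hEven : coeff (4 * n + 1) ((1 - 2 * expand 4 (by norm_num) q +
      4 * expand 4 (by norm_num) q ^ 2 + 4 * (X * expand 8 (by norm_num) ψ) ^ 2) *
      (1 - 2 * expand 2 two_ne_zero (π₈ phiNegTail) +
        4 * expand 2 two_ne_zero (π₈ phiNegTail) ^ 2) ^ (2 * m + 1)) = 0 := by
    rw [show ∀ s : (ZMod 8)⟦X⟧, (1 - 2 * expand 4 (by norm_num) q +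
        4 * expand 4 (by norm_num) q ^ 2 + 4 * (X * expand 8 (by norm_num) ψ) ^ 2) *
        (1 - 2 * expand 2 two_ne_zero s + 4 * expand 2 two_ne_zero s ^ 2) ^ (2 * m + 1) =
      expand 2 two_ne_zero ((1 - 2 * expand 2 two_ne_zero q + 4 * expand 2 two_ne_zero q ^ 2 +
        4 * X * expand 4 (by norm_num) ψ ^ 2) * (1 - 2 * s + 4 * s ^ 2) ^ (2 * m + 1)) by
      intro s
      simp only [expand_mul 2 two_ne_zero 2 two_ne_zero, expand_mul 2 two_ne_zero 4 (by norm_num),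
        map_mul, map_add, map_sub, map_pow, map_one, map_ofNat, expand_X]
      ring]
    exact coeff_expand_of_not_dvd _ _ _ (by omega)
  have hThree : coeff (4 * n + 1) (4 * (X * expand 8 (by norm_num) ψ *
      expand 2 two_ne_zero (X * expand 8 (by norm_num) ψ))) = 0 := by
    rw [← map_ofNat C 4, coeff_C_mul, coeff_X_mul_expand_mul_expand_eq_zero, mul_zero]
  have hMain : coeff (4 * n + 1) (2 * (X * expand 8 (by norm_num) ψ) *
      expand 8 (by norm_num) (π₈ phiNeg)) =
      2 * coeff (4 * n) (π₈ (expand 8 (by norm_num) (psi * phiNeg))) := by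
    rw [show 2 * (X * expand 8 (by norm_num) ψ) * expand 8 (by norm_num) (π₈ phiNeg) =
        C 2 * (X * π₈ (expand 8 (by norm_num) (psi * phiNeg))) by
          simp only [ψ, map_expand, map_mul, map_ofNat]; ring,
      coeff_C_mul, coeff_succ_X_mul]
  have key := congrArg (coeff (4 * n + 1)) (map_eq_of_mul_phiNeg hA)
  rw [map_add, map_add, hEven, hThree, hMain, coeff_map, coeff_map] at key
  simpa using key

end Overcubic

end

open Overcubic

/-- For all `m, n ≥ 0`, `a̅_{2m+2}(4n+1) ≡ 2 h(n) (mod 8)`, where `h(n)` is the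
coefficient of `qⁿ` in `f₂ f₄ = (q²;q²)_∞ (q⁴;q⁴)_∞`. -/
theorem overcubic_even_congr_f2f4 (abar : ℕ → ℕ → ℕ)
    (habar : IsGenOvercubic abar) (m n : ℕ) :
    (abar (2 * m + 2) (4 * n + 1) : ℤ) ≡
      2 * PowerSeries.coeff (R := ℤ) n (qPochInf ℤ 2 * qPochInf ℤ 4) [ZMOD 8] := by
  have hA := mk_mul_phiNeg_mul_expand_phiNeg_pow habar (c := 2 * m + 2) (by omega)
  rw [show 2 * m + 2 - 1 = 2 * m + 1 by omega] at hA
  have hexp : expand 8 (by norm_num) (psi * phiNeg) =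
      expand 4 (by norm_num) (qPochInf ℤ 2 * qPochInf ℤ 4) := by
    rw [expand_mul 4 (by norm_num) 2 two_ne_zero, psi_mul_phiNeg, map_mul,
      expand_qPochInf _ le_rfl, expand_qPochInf _ one_le_two]
    rfl
  have h := coeff_four_mul_add_one_eq hA n
  rw [hexp, coeff_expand_mul, coeff_mk] at h
  exact (ZMod.intCast_eq_intCast_iff _ _ 8).mp (by push_cast at h ⊢; exact h)
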